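/- arXiv:2108.07609 — 4 statements merged into one kernel-verified Lean document; each statement's English description precedes it below -/
import Mathlib

section
/- Let $1<p<2$ and suppose $f\in C^0(\mathbb{R})\cap C^1(\mathbb{R}\setminus\{0\})$ satisfies: there exists $q\in(p,p^*)$ with $\frac{d}{dt}\frac{f(t)}{t^{q-1}}<0$ for all $t>0$, and $\lim_{t\to 0^+} t^{2-p}f'(t)=0$. Then there exists $c>0$ such that for every $t>0$, $t f'(t) \le \frac{p-1}{2} t^{p-1} + c\, t^{q-1}$. -/
open Real Filter Set

theorem stmt0 (N p q : ℝ) (f : ℝ → ℝ)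
    (hp : 1 < p) (hp2 : p < 2) (hN : p < N) (hq : p < q) (hq2 : q < N * p / (N - p))
    (hfc : Continuous f) (hfd : ∀ t : ℝ, t ≠ 0 → DifferentiableAt ℝ f t)
    (hf0 : ∀ t ≤ (0:ℝ), f t = 0)
    (hf1 : ∀ t > (0:ℝ), deriv (fun t => f t / t ^ (q - 1)) t < 0)
    (hf4 : Tendsto (fun t => t ^ (2 - p) * deriv f t) (nhdsWithin 0 (Set.Ioi 0)) (nhds 0)) :
    ∃ c > (0:ℝ), ∀ t > (0:ℝ), t * deriv f t ≤ (p - 1) / 2 * t ^ (p - 1) + c * t ^ (q - 1) := by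
  have hq1 : (1:ℝ) < q := lt_trans hp hq
  -- Key pointwise inequality from hf1
  have key : ∀ t > (0:ℝ), t * deriv f t ≤ (q - 1) * f t := by
    intro t ht
    have hne : t ≠ 0 := ne_of_gt ht
    have hd1 : HasDerivAt f (deriv f t) t := (hfd t hne).hasDerivAt
    have hd2 : HasDerivAt (fun x : ℝ => x ^ (q-1)) ((q-1) * t ^ (q-1-1)) t :=
      Real.hasDerivAt_rpow_const (Or.inl hne)
    have hpow : (0:ℝ) < t ^ (q-1) := Real.rpow_pos_of_pos ht _
    have hdq : HasDerivAt (fun x => f x / x ^ (q-1))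
        ((deriv f t * t ^ (q-1) - f t * ((q-1) * t ^ (q-1-1))) / (t ^ (q-1))^2) t :=
      hd1.div hd2 (ne_of_gt hpow)
    have h := hf1 t ht
    rw [hdq.deriv] at h
    have hnum : deriv f t * t ^ (q-1) - f t * ((q-1) * t ^ (q-1-1)) < 0 := by
      by_contra hc
      push_neg at hc
      have := div_nonneg hc (le_of_lt (pow_pos hpow 2))
      linarith
    have h1 : t ^ (q-1) = t ^ (q-1-1) * t := by
      rw [← Real.rpow_add_one hne]; ring_nf
    rw [h1] at hnum
    have hpow2 : (0:ℝ) < t ^ (q-1-1) := Real.rpow_pos_of_pos ht _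
    nlinarith [mul_pos hpow2 ht]
  -- g is antitone on (0,∞)
  set g : ℝ → ℝ := fun t => f t / t ^ (q-1) with hg
  have hganti : StrictAntiOn g (Ioi 0) := by
    apply strictAntiOn_of_deriv_neg (convex_Ioi 0)
    · apply ContinuousOn.div hfc.continuousOn
      · intro t ht
        exact (Real.continuousAt_rpow_const t _ (Or.inl (ne_of_gt ht))).continuousWithinAt
      · intro t ht
        exact ne_of_gt (Real.rpow_pos_of_pos ht _)
    · rw [interior_Ioi]
      exact hf1
  -- From hf4, get δ
  have hev := hf4 (Iio_mem_nhds (by linarith : (0:ℝ) < (p-1)/2))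
  rw [mem_map, Metric.mem_nhdsWithin_iff] at hev
  obtain ⟨ε, hε, hball⟩ := hev
  set M : ℝ := (q - 1) * g ε with hM
  refine ⟨max M 0 + 1, by positivity, ?_⟩
  intro t ht
  have hpowq : (0:ℝ) < t ^ (q-1) := Real.rpow_pos_of_pos ht _
  have hpowp : (0:ℝ) < t ^ (p-1) := Real.rpow_pos_of_pos ht _
  by_cases htε : t < ε
  · -- small t
    have hmem : t ∈ Metric.ball (0:ℝ) ε ∩ Ioi 0 := by
      constructor
      · simp [Real.dist_eq, abs_of_pos ht, htε]
      · exact ht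
    have hsmall : t ^ (2-p) * deriv f t < (p-1)/2 := hball hmem
    have hsplit : t ^ (p-1) * t ^ (2-p) = t := by
      rw [← Real.rpow_add ht]; norm_num
    calc t * deriv f t = t ^ (p-1) * (t ^ (2-p) * deriv f t) := by
          rw [← mul_assoc, hsplit]
      _ ≤ t ^ (p-1) * ((p-1)/2) := by
          apply mul_le_mul_of_nonneg_left (le_of_lt hsmall) (le_of_lt hpowp)
      _ ≤ (p-1)/2 * t ^ (p-1) + (max M 0 + 1) * t ^ (q-1) := by
          have : (0:ℝ) ≤ (max M 0 + 1) * t ^ (q-1) := by positivity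
          linarith
  · -- t ≥ ε
    push_neg at htε
    have hgle : g t ≤ g ε := (hganti.antitoneOn) (mem_Ioi.2 hε) (mem_Ioi.2 ht) htε
    have hft : f t = g t * t ^ (q-1) := by
      rw [hg]; field_simp
    have h2 : (q - 1) * f t ≤ M * t ^ (q-1) := by
      rw [hft, hM]
      have := mul_le_mul_of_nonneg_right hgle (le_of_lt hpowq)
      nlinarith
    have h3 : M * t ^ (q-1) ≤ (max M 0 + 1) * t ^ (q-1) := by
      apply mul_le_mul_of_nonneg_right _ (le_of_lt hpowq)
      have := le_max_left M 0
      linarith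
    have h4 : (0:ℝ) ≤ (p-1)/2 * t ^ (p-1) := by
      have hp1 : (0:ℝ) < p - 1 := by linarith
      positivity
    have := key t ht
    linarith
end

section
/- Let $1<p\le 3/2$ and $\alpha\ge 0$. Define $G_\alpha(t)=\frac{1}{p}(\alpha+t^2)^{p/2}$. Then for every $t\in\mathbb{R}$, $|G_0'(t)-G_\alpha'(t)| \le \alpha^{(p-1)/2}$, where $G_0'(t)=|t|^{p-2}t$ and $G_\alpha'(t)=t(\alpha+t^2)^{(p-2)/2}$. -/
open Real

/-!
With `s = |t|`, `β = √α`, `r = √(s² + β²)` and `e = p - 1 ∈ (0, 1/2]`, the quantity to bound is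
`s ^ e - s * r ^ (e - 1) ≥ 0`. Multiplying by `r ^ (1 - e)` and using the subadditivity
`r ^ (1 - e) ≤ (s + β) ^ (1 - e) ≤ s ^ (1 - e) + β ^ (1 - e)` reduces the claim to
`s ^ e * β ^ (1 - e) ≤ β ^ e * r ^ (1 - e)`. This is monotonicity when `s ≤ β`, and when `β ≤ s`
it follows from `β ^ (1 - 2e) ≤ s ^ (1 - 2e)`, as `1 - 2e ≥ 0`.
-/

theorem rpow_mul_rpow_le_rpow_mul_rpow {s β r a b : ℝ} (hs : 0 ≤ s) (hβ : 0 ≤ β)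
    (hsr : s ≤ r) (hβr : β ≤ r) (ha : 0 ≤ a) (hab : a ≤ b) :
    s ^ a * β ^ b ≤ β ^ a * r ^ b := by
  have hb : 0 ≤ b := ha.trans hab
  rcases le_total s β with hsβ | hβs
  · gcongr
  · calc s ^ a * β ^ b = (s * β) ^ a * β ^ (b - a) := by
          rw [mul_rpow hs hβ, mul_assoc, ← rpow_add_of_nonneg hβ ha (sub_nonneg.2 hab),
            add_sub_cancel]
      _ ≤ (s * β) ^ a * s ^ (b - a) := by gcongr
      _ = β ^ a * s ^ b := by
          rw [mul_rpow hs hβ, mul_comm (s ^ a), mul_assoc,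
            ← rpow_add_of_nonneg hs ha (sub_nonneg.2 hab), add_sub_cancel]
      _ ≤ β ^ a * r ^ b := by gcongr

theorem mul_abs_rpow_sub_rpow_sqrt_le {s β e : ℝ} (hs : 0 ≤ s) (hβ : 0 ≤ β) (he : 0 ≤ e)
    (he2 : e ≤ 1 / 2) :
    s * |s ^ (e - 1) - √(s ^ 2 + β ^ 2) ^ (e - 1)| ≤ β ^ e := by
  rcases hs.eq_or_lt with rfl | hs
  · rw [zero_mul]; positivity
  set r := √(s ^ 2 + β ^ 2)
  have hsr : s ≤ r := (le_sqrt hs.le (by positivity)).2 (by nlinarith)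
  have hβr : β ≤ r := (le_sqrt hβ (by positivity)).2 (by nlinarith)
  have hr : 0 < r := hs.trans_le hsr
  have hr_subadd : r ^ (1 - e) ≤ s ^ (1 - e) + β ^ (1 - e) :=
    calc r ^ (1 - e) ≤ (s + β) ^ (1 - e) :=
          rpow_le_rpow hr.le (sqrt_le_iff.2 ⟨by positivity, by nlinarith⟩) (by linarith)
      _ ≤ s ^ (1 - e) + β ^ (1 - e) := rpow_add_le_add_rpow hs.le hβ (by linarith) (by linarith)
  rw [abs_of_nonneg (sub_nonneg.2 (rpow_le_rpow_of_nonpos hs hsr (by linarith)))]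
  refine le_of_mul_le_mul_right ?_ (rpow_pos_of_pos hr (1 - e))
  calc s * (s ^ (e - 1) - r ^ (e - 1)) * r ^ (1 - e)
        = s ^ e * r ^ (1 - e) - s := by
          rw [mul_sub, sub_mul, mul_assoc s (r ^ _), ← rpow_add hr, rpow_sub_one hs.ne',
            mul_div_cancel₀ _ hs.ne']
          ring_nf
          rw [rpow_zero, mul_one]
      _ ≤ s ^ e * (s ^ (1 - e) + β ^ (1 - e)) - s := by gcongr
      _ = s ^ e * β ^ (1 - e) := by
          rw [mul_add, ← rpow_add hs, add_sub_cancel, rpow_one]; ring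
      _ ≤ β ^ e * r ^ (1 - e) := rpow_mul_rpow_le_rpow_mul_rpow hs.le hβ hsr hβr he (by linarith)

theorem stmt4 (p α : ℝ) (hp : 1 < p) (hp2 : p ≤ 3 / 2) (hα : 0 ≤ α) :
    ∀ t : ℝ, |(|t| ^ (p - 2) * t) - t * (α + t ^ 2) ^ ((p - 2) / 2)| ≤ α ^ ((p - 1) / 2) := by
  intro t
  have hsqrt_sum : (α + t ^ 2) ^ ((p - 2) / 2) = √(|t| ^ 2 + √α ^ 2) ^ (p - 1 - 1) := by
    rw [sq_abs, sq_sqrt hα, add_comm, sqrt_eq_rpow, ← rpow_mul (by positivity)]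
    congr 1; ring
  have hsqrt : α ^ ((p - 1) / 2) = √α ^ (p - 1) := by
    rw [sqrt_eq_rpow, ← rpow_mul hα]
    congr 1; ring
  rw [hsqrt_sum, hsqrt, show p - 2 = p - 1 - 1 by ring, ← mul_comm t, ← mul_sub, abs_mul]
  exact mul_abs_rpow_sub_rpow_sqrt_le (abs_nonneg t) (sqrt_nonneg α) (by linarith) (by linarith)
end

section
/- Let $3/2<p<2$ and $\alpha\ge 0$. Define $G_\alpha(t)=\frac{1}{p}(\alpha+t^2)^{p/2}$. Then for every $t\neq 0$, $|G_0'(t)-G_\alpha'(t)| \le \alpha^{(2-p)/2}|t|^{2p-3}$, where $G_0'(t)=|t|^{p-2}t$ and $G_\alpha'(t)=t(\alpha+t^2)^{(p-2)/2}$. -/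
open Real

lemma my_rpow_subadd {x y q : ℝ} (hx : 0 ≤ x) (hy : 0 ≤ y) (hq : 0 ≤ q) (hq1 : q ≤ 1) :
    (x + y) ^ q ≤ x ^ q + y ^ q := by
  have := NNReal.rpow_add_le_add_rpow (x.toNNReal) (y.toNNReal) hq hq1
  have h := NNReal.coe_le_coe.mpr this
  push_cast at h
  rwa [Real.coe_toNNReal _ hx, Real.coe_toNNReal _ hy] at h

theorem stmt5 (p α : ℝ) (hp : 3 / 2 < p) (hp2 : p < 2) (hα : 0 ≤ α) :
    ∀ t : ℝ, t ≠ 0 →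
      |(|t| ^ (p - 2) * t) - t * (α + t ^ 2) ^ ((p - 2) / 2)|
        ≤ α ^ ((2 - p) / 2) * |t| ^ (2 * p - 3) := by
  intro t ht
  have hs : (0:ℝ) < |t| := abs_pos.mpr ht
  have hA : (0:ℝ) < t ^ 2 := by positivity
  have hB : (0:ℝ) < α + t ^ 2 := by linarith
  set e : ℝ := (p - 2) / 2 with he
  set q : ℝ := (2 - p) / 2 with hqdef
  have hq : 0 < q := by rw [hqdef]; linarith
  have hq1 : q ≤ 1 := by rw [hqdef]; linarith
  have heq : e = -q := by rw [he, hqdef]; ring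
  -- h1 : |t|^(p-2) = (t^2)^e
  have h1 : |t| ^ (p - 2) = (t ^ 2 : ℝ) ^ e := by
    rw [← sq_abs t, ← Real.rpow_natCast |t| 2, ← Real.rpow_mul hs.le]
    norm_num [he]
    ring_nf
  have h2 : (α + t ^ 2) ^ e ≤ (t ^ 2 : ℝ) ^ e := by
    apply Real.rpow_le_rpow_of_nonpos hA (by linarith)
    rw [he]; linarith
  -- rewrite the absolute value
  have habs : |(|t| ^ (p - 2) * t) - t * (α + t ^ 2) ^ e|
      = |t| * ((t ^ 2 : ℝ) ^ e - (α + t ^ 2) ^ e) := by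
    rw [h1]
    rw [show (t ^ 2 : ℝ) ^ e * t - t * (α + t ^ 2) ^ e
        = t * ((t ^ 2 : ℝ) ^ e - (α + t ^ 2) ^ e) by ring, abs_mul,
      abs_of_nonneg (sub_nonneg.mpr h2)]
  rw [habs]
  -- key inequality: X - Y ≤ α^q * X * Y
  have hXinv : (t ^ 2 : ℝ) ^ e * (t ^ 2 : ℝ) ^ q = 1 := by
    rw [← Real.rpow_add hA, heq]; simp
  have hYinv : (α + t ^ 2) ^ e * (α + t ^ 2) ^ q = 1 := by
    rw [← Real.rpow_add hB, heq]; simp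
  have hsub : (α + t ^ 2) ^ q ≤ α ^ q + (t ^ 2 : ℝ) ^ q :=
    my_rpow_subadd hα hA.le hq.le hq1
  have hXpos : (0:ℝ) < (t ^ 2 : ℝ) ^ e := Real.rpow_pos_of_pos hA e
  have hYpos : (0:ℝ) < (α + t ^ 2) ^ e := Real.rpow_pos_of_pos hB e
  have hkey : (t ^ 2 : ℝ) ^ e - (α + t ^ 2) ^ e
      ≤ α ^ q * ((t ^ 2 : ℝ) ^ e * (α + t ^ 2) ^ e) := by
    have hid : (t ^ 2 : ℝ) ^ e - (α + t ^ 2) ^ e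
        = (t ^ 2 : ℝ) ^ e * (α + t ^ 2) ^ e * ((α + t ^ 2) ^ q - (t ^ 2 : ℝ) ^ q) := by
      have : (t ^ 2 : ℝ) ^ e * (α + t ^ 2) ^ e * ((α + t ^ 2) ^ q - (t ^ 2 : ℝ) ^ q)
          = (t ^ 2 : ℝ) ^ e * ((α + t ^ 2) ^ e * (α + t ^ 2) ^ q)
            - (α + t ^ 2) ^ e * ((t ^ 2 : ℝ) ^ e * (t ^ 2 : ℝ) ^ q) := by ring
      rw [this, hXinv, hYinv]; ring
    rw [hid]
    have hdiff : (α + t ^ 2) ^ q - (t ^ 2 : ℝ) ^ q ≤ α ^ q := by linarith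
    nlinarith [mul_pos hXpos hYpos]
  -- chain
  have hαq : 0 ≤ α ^ q := Real.rpow_nonneg hα q
  have step2 : (t ^ 2 : ℝ) ^ e - (α + t ^ 2) ^ e
      ≤ α ^ q * ((t ^ 2 : ℝ) ^ e * (t ^ 2 : ℝ) ^ e) := by
    refine hkey.trans ?_
    apply mul_le_mul_of_nonneg_left _ hαq
    exact mul_le_mul_of_nonneg_left h2 hXpos.le
  have hfinal : |t| * ((t ^ 2 : ℝ) ^ e - (α + t ^ 2) ^ e)
      ≤ |t| * (α ^ q * ((t ^ 2 : ℝ) ^ e * (t ^ 2 : ℝ) ^ e)) :=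
    mul_le_mul_of_nonneg_left step2 hs.le
  refine hfinal.trans_eq ?_
  rw [← h1, ← Real.rpow_add hs]
  rw [show |t| * (α ^ q * |t| ^ (p - 2 + (p - 2))) = α ^ q * (|t| ^ (p - 2 + (p - 2)) * |t| ^ (1:ℝ)) by
    rw [Real.rpow_one]; ring, ← Real.rpow_add hs]
  norm_num
  left
  ring
end

section
/- Let $f:(0,\infty)\to(0,\infty)$ be nondecreasing, $s>1$ such that $t\mapsto f^2(t)/t^{s-1}$ is decreasing on $(0,\infty)$, and such that $k(t)=t^{(s-1)/s}/f(t^{1/s})$ satisfies $k(a)<k(a+b)<k(a)+k(b)$ for all $a,b>0$. Set $F_\alpha'(t) := f\bigl((\alpha+t^s)^{1/s}\bigr)\, t^{s-1}(\alpha+t^s)^{-(s-1)/s}$ for $t>0$, $\alpha>0$. Then for all $t>0$ and $\alpha>0$, $|f(t) - F_\alpha'(t)| \le f(\alpha^{1/s})$. -/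
open Real

theorem stmt8 (s : ℝ) (f : ℝ → ℝ) (hs : 1 < s)
    (hfpos : ∀ t > (0:ℝ), 0 < f t)
    (hmono : ∀ t₁ t₂ : ℝ, 0 < t₁ → t₁ ≤ t₂ → f t₁ ≤ f t₂)
    (hdec : ∀ t₁ t₂ : ℝ, 0 < t₁ → t₁ ≤ t₂ → (f t₂) ^ 2 / t₂ ^ (s - 1) ≤ (f t₁) ^ 2 / t₁ ^ (s - 1))
    (hk : ∀ a b : ℝ, 0 < a → 0 < b →
      a ^ ((s - 1) / s) / f (a ^ (1 / s)) < (a + b) ^ ((s - 1) / s) / f ((a + b) ^ (1 / s)) ∧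
      (a + b) ^ ((s - 1) / s) / f ((a + b) ^ (1 / s))
        < a ^ ((s - 1) / s) / f (a ^ (1 / s)) + b ^ ((s - 1) / s) / f (b ^ (1 / s))) :
    ∀ t > (0:ℝ), ∀ α > (0:ℝ),
      |f t - f ((α + t ^ s) ^ (1 / s)) * t ^ (s - 1) * (α + t ^ s) ^ (-(s - 1) / s)|
        ≤ f (α ^ (1 / s)) := by
  intro t ht α hα
  have hs0 : (0:ℝ) < s := by linarith
  have hsne : s ≠ 0 := ne_of_gt hs0
  have hA : 0 < t ^ s := Real.rpow_pos_of_pos ht s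
  have hαA : 0 < α + t ^ s := by linarith
  set P := (α + t ^ s) ^ ((s-1)/s) with hP_def
  have hP : 0 < P := Real.rpow_pos_of_pos hαA _
  set v := (α + t ^ s) ^ (1/s) with hv_def
  set u := α ^ (1/s) with hu_def
  have hu : 0 < u := Real.rpow_pos_of_pos hα _
  have hvpos : 0 < v := Real.rpow_pos_of_pos hαA _
  have hft : 0 < f t := hfpos t ht
  have hfu : 0 < f u := hfpos u hu
  have hfv : 0 < f v := hfpos v hvpos
  have hαc : 0 < α ^ ((s-1)/s) := Real.rpow_pos_of_pos hα _
  have hts : (t ^ s) ^ (1/s) = t := by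
    rw [← Real.rpow_mul ht.le, mul_one_div, div_self hsne, Real.rpow_one]
  have htQ : (t ^ s) ^ ((s-1)/s) = t ^ (s-1) := by
    rw [← Real.rpow_mul ht.le]; congr 1; field_simp
  have hQ : 0 < t ^ (s-1) := Real.rpow_pos_of_pos ht _
  have hvP : v ^ (s-1) = P := by
    rw [hv_def, hP_def, ← Real.rpow_mul hαA.le]; congr 1; field_simp
  have huc : u ^ (s-1) = α ^ ((s-1)/s) := by
    rw [hu_def, ← Real.rpow_mul hα.le]; congr 1; field_simp
  have hneg : (α + t ^ s) ^ (-(s-1)/s) = P⁻¹ := by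
    rw [hP_def, neg_div, Real.rpow_neg hαA.le]
  obtain ⟨h1, h2⟩ := hk (t ^ s) α hA hα
  rw [hts, htQ, add_comm (t ^ s) α] at h1 h2
  have htv : t ≤ v := by
    rw [← hts, hv_def]
    exact Real.rpow_le_rpow hA.le (by linarith) (by positivity)
  have huv : u ≤ v := by
    rw [hu_def, hv_def]
    exact Real.rpow_le_rpow hα.le (by linarith) (by positivity)
  have hftv : f t ≤ f v := hmono t v ht htv
  have hdec' := hdec u v hu huv
  rw [hvP, huc] at hdec'
  have hkey : (f v) ^ 2 * α ^ ((s-1)/s) ≤ (f u) ^ 2 * P :=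
    (div_le_div_iff₀ hP hαc).mp hdec'
  have h1' : t ^ (s-1) * f v < P * f t := (div_lt_div_iff₀ hft hfv).mp h1
  rw [div_add_div _ _ hft.ne' hfu.ne', div_lt_div_iff₀ hfv (by positivity)] at h2
  -- h2 : P * (f t * f u) < (t ^ (s-1) * f u + α ^ ((s-1)/s) * f t) * f v
  rw [hneg]
  clear_value P v u
  rw [← hP_def] at h2
  have hlt : f v * t ^ (s-1) * P⁻¹ < f t := by
    rw [← div_eq_mul_inv, div_lt_iff₀ hP]
    nlinarith [h1']
  have hsub : 0 < f t - f v * t ^ (s-1) * P⁻¹ := by linarith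
  rw [abs_of_pos hsub]
  have step : α ^ ((s-1)/s) * f v * f t ≤ (f u) ^ 2 * P := by
    have h4 : α ^ ((s-1)/s) * f v * f t ≤ α ^ ((s-1)/s) * f v * f v :=
      mul_le_mul_of_nonneg_left hftv (by positivity)
    nlinarith [h4, hkey]
  have h3 : P * (f t * f u) < t ^ (s-1) * f u * f v + (f u) ^ 2 * P := by linarith [h2, step]
  have hle : f t - f u ≤ f v * t ^ (s-1) * P⁻¹ := by
    rw [← div_eq_mul_inv, le_div_iff₀ hP]
    have h5 : f u * ((f t - f u) * P) < f u * (f v * t ^ (s-1)) := by linarith [h3]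
    exact le_of_lt ((mul_lt_mul_iff_right₀ hfu).mp h5)
  linarith
end
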